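/- arXiv:2109.01691 — 3 statements merged into one kernel-verified Lean document; each statement's English description precedes it below -/
import Mathlib

section
/- Let F : Finset V → ℝ be a monotone increasing submodular set function on subsets of a finite set V with F(∅) = 0, and let k be a positive integer. Let S_greedy be the set produced by k steps of the greedy algorithm that at each step adds an element maximizing the marginal gain. Then F(S_greedy) ≥ (1 − (1 − 1/k)^k) · max{F(S) : |S| ≤ k} ≥ (1 − 1/e) · max{F(S) : |S| ≤ k}. -/
lemma greedy_aux_sum {V : Type*} [DecidableEq V] (F : Finset V → ℝ)
    (hsub : ∀ (A B : Finset V) (e : V), A ⊆ B → e ∉ B →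
      F (insert e B) - F B ≤ F (insert e A) - F A) :
    ∀ A B : Finset V, F (A ∪ B) ≤ F B + ∑ x ∈ A, (F (insert x B) - F B) := by
  intro A
  induction A using Finset.induction_on with
  | empty => intro B; simp
  | insert _ _ ha ih =>
    rename_i a A
    intro B
    rw [Finset.insert_union, Finset.sum_insert ha]
    by_cases hb : a ∈ B
    · have h1 : insert a (A ∪ B) = A ∪ B := by
        rw [Finset.insert_eq_self]; exact Finset.mem_union_right _ hb
      have h2 : insert a B = B := by rw [Finset.insert_eq_self]; exact hb
      rw [h1, h2]
      have := ih B
      linarith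
    · have hab : a ∉ A ∪ B := by simp [ha, hb]
      have h1 := hsub B (A ∪ B) a (Finset.subset_union_right) hab
      have := ih B
      linarith

/-- Nemhauser–Wolsey–Fisher greedy guarantee: if `F` is monotone, submodular and `F ∅ = 0`,
and `S` is a greedy sequence (each step adding an element of maximal marginal gain),
then after `k` steps `F (S k)` is within a factor `1 − (1 − 1/k)^k ≥ 1 − 1/e` of the
optimum over sets of cardinality at most `k`. -/
theorem greedy_submodular_guarantee
    {V : Type*} [Fintype V] [DecidableEq V] [Nonempty V] (F : Finset V → ℝ)
    (hmono : ∀ A B : Finset V, A ⊆ B → F A ≤ F B)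
    (hsub : ∀ (A B : Finset V) (e : V), A ⊆ B → e ∉ B →
      F (insert e B) - F B ≤ F (insert e A) - F A)
    (hempty : F ∅ = 0)
    (k : ℕ) (hk : 0 < k)
    (S : ℕ → Finset V) (e : ℕ → V)
    (hS0 : S 0 = ∅)
    (hSsucc : ∀ i, S (i + 1) = insert (e i) (S i))
    (hgreedy : ∀ i, ∀ x : V, F (insert x (S i)) - F (S i) ≤ F (insert (e i) (S i)) - F (S i)) :
    ∀ T : Finset V, T.card ≤ k →
      (1 - (1 - 1 / (k : ℝ)) ^ k) * F T ≤ F (S k) ∧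
      (1 - 1 / Real.exp 1) * F T ≤ F (S k) := by
  intro T hT
  have hkR : (0:ℝ) < (k:ℝ) := by exact_mod_cast hk
  have hFT : 0 ≤ F T := by
    have := hmono ∅ T (Finset.empty_subset T); linarith [hempty ▸ this]
  -- key step inequality
  have hstep : ∀ i, F T - F (S (i+1)) ≤ (1 - 1/(k:ℝ)) * (F T - F (S i)) := by
    intro i
    have hsum := greedy_aux_sum F hsub T (S i)
    have hmT : F T ≤ F (T ∪ S i) := hmono _ _ Finset.subset_union_left
    set g : ℝ := F (S (i+1)) - F (S i) with hg
    have hg' : F (S (i+1)) = F (insert (e i) (S i)) := by rw [hSsucc i]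
    have hgpos : 0 ≤ g := by
      have := hgreedy i (e i)
      have hx : ∀ x : V, 0 ≤ F (insert x (S i)) - F (S i) := fun x => by
        have := hmono (S i) (insert x (S i)) (Finset.subset_insert _ _); linarith
      obtain ⟨x⟩ := ‹Nonempty V›
      have := hgreedy i x
      have := hx x
      rw [hg, hg']; linarith
    have hterm : ∀ x ∈ T, F (insert x (S i)) - F (S i) ≤ g := by
      intro x _
      rw [hg, hg']; exact hgreedy i x
    have hsum2 : ∑ x ∈ T, (F (insert x (S i)) - F (S i)) ≤ (T.card : ℝ) * g := by
      calc ∑ x ∈ T, (F (insert x (S i)) - F (S i)) ≤ ∑ _x ∈ T, g :=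
            Finset.sum_le_sum hterm
        _ = (T.card : ℝ) * g := by rw [Finset.sum_const, nsmul_eq_mul]
    have hcard : (T.card : ℝ) * g ≤ (k:ℝ) * g := by
      apply mul_le_mul_of_nonneg_right _ hgpos
      exact_mod_cast hT
    have hkey : F T - F (S i) ≤ (k:ℝ) * g := by linarith
    have : (k:ℝ) * (F T - F (S (i+1))) ≤ ((k:ℝ) - 1) * (F T - F (S i)) := by
      rw [hg] at hkey; ring_nf; ring_nf at hkey; nlinarith
    have h2 : (1 - 1/(k:ℝ)) = ((k:ℝ) - 1) / (k:ℝ) := by field_simp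
    rw [h2, div_mul_eq_mul_div, le_div_iff₀ hkR]
    linarith
  have hq : 0 ≤ 1 - 1/(k:ℝ) := by
    rw [sub_nonneg]; rw [div_le_one hkR]; exact_mod_cast hk
  have hiter : ∀ i, F T - F (S i) ≤ (1 - 1/(k:ℝ))^i * F T := by
    intro i
    induction i with
    | zero => simp [hS0, hempty]
    | succ n ih =>
      calc F T - F (S (n+1)) ≤ (1 - 1/(k:ℝ)) * (F T - F (S n)) := hstep n
        _ ≤ (1 - 1/(k:ℝ)) * ((1 - 1/(k:ℝ))^n * F T) :=
            mul_le_mul_of_nonneg_left ih hq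
        _ = (1 - 1/(k:ℝ))^(n+1) * F T := by ring
  have hmain := hiter k
  have hexp : (1 - 1/(k:ℝ))^k ≤ 1 / Real.exp 1 := by
    have h1 : 1 - 1/(k:ℝ) ≤ Real.exp (-(1/(k:ℝ))) := by
      have := Real.add_one_le_exp (-(1/(k:ℝ))); linarith
    calc (1 - 1/(k:ℝ))^k ≤ (Real.exp (-(1/(k:ℝ))))^k := pow_le_pow_left₀ hq h1 k
      _ = Real.exp ((k:ℝ) * (-(1/(k:ℝ)))) := by rw [← Real.exp_nat_mul]
      _ = Real.exp (-1) := by rw [mul_neg, mul_one_div, div_self (ne_of_gt hkR)]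
      _ = 1 / Real.exp 1 := by rw [Real.exp_neg]; ring
  constructor
  · nlinarith
  · have : (1 - 1/Real.exp 1) * F T ≤ (1 - (1 - 1/(k:ℝ))^k) * F T := by
      apply mul_le_mul_of_nonneg_right _ hFT; linarith
    nlinarith
end

section
/- Let F : Finset V → ℝ be monotone submodular with F(∅) = 0, let S* be an optimal set of size k, and let S_i be the greedy set after i steps. Then F(S*) − F(S_{i+1}) ≤ (1 − 1/k)(F(S*) − F(S_i)). -/
/-- Telescoping bound: for submodular monotone `F`,
`F (A ∪ T) ≤ F A + ∑ x in T, (F (insert x A) - F A)`. -/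
lemma submodular_union_bound
    {V : Type*} [DecidableEq V] (F : Finset V → ℝ)
    (hsub : ∀ (A B : Finset V) (e : V), A ⊆ B → e ∉ B →
      F (insert e B) - F B ≤ F (insert e A) - F A)
    (hmono : ∀ A B : Finset V, A ⊆ B → F A ≤ F B)
    (A : Finset V) (T : Finset V) :
    F (A ∪ T) ≤ F A + ∑ x ∈ T, (F (insert x A) - F A) := by
  induction T using Finset.induction_on with
  | empty => simp
  | @insert a T' ha ih =>
    rw [Finset.sum_insert ha]
    have h1 : A ∪ insert a T' = insert a (A ∪ T') := by
      ext x; simp [or_comm, or_left_comm, or_assoc]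
    rw [h1]
    by_cases haU : a ∈ A ∪ T'
    · rw [Finset.insert_eq_self.mpr haU]
      have h2 : 0 ≤ F (insert a A) - F A := by
        have := hmono A (insert a A) (Finset.subset_insert _ _)
        linarith
      linarith
    · have h3 := hsub A (A ∪ T') a Finset.subset_union_left haU
      linarith

/-- Single-step contraction lemma for greedy maximization of a monotone submodular
function: the residual gap to a size-`k` optimum shrinks by a factor `1 − 1/k` per step. -/
theorem greedy_contraction_step
    {V : Type*} [Fintype V] [DecidableEq V] (F : Finset V → ℝ)
    (hmono : ∀ A B : Finset V, A ⊆ B → F A ≤ F B)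
    (hsub : ∀ (A B : Finset V) (e : V), A ⊆ B → e ∉ B →
      F (insert e B) - F B ≤ F (insert e A) - F A)
    (hempty : F ∅ = 0)
    (k : ℕ) (hk : 0 < k)
    (Sstar : Finset V) (hcard : Sstar.card = k)
    (hopt : ∀ T : Finset V, T.card ≤ k → F T ≤ F Sstar)
    (S : ℕ → Finset V) (e : ℕ → V)
    (hS0 : S 0 = ∅)
    (hSsucc : ∀ i, S (i + 1) = insert (e i) (S i))
    (hgreedy : ∀ i, ∀ x : V, F (insert x (S i)) - F (S i) ≤ F (insert (e i) (S i)) - F (S i))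
    (i : ℕ) :
    F Sstar - F (S (i + 1)) ≤ (1 - 1 / (k : ℝ)) * (F Sstar - F (S i)) := by
  set δ : ℝ := F (S (i + 1)) - F (S i) with hδ
  have hSi1 : F (S (i + 1)) = F (insert (e i) (S i)) := by rw [hSsucc]
  -- F Sstar ≤ F (S i ∪ Sstar)
  have h1 : F Sstar ≤ F (S i ∪ Sstar) := hmono _ _ Finset.subset_union_right
  have h2 := submodular_union_bound F hsub hmono (S i) Sstar
  have h3 : ∑ x ∈ Sstar, (F (insert x (S i)) - F (S i)) ≤ (k : ℝ) * δ := by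
    calc ∑ x ∈ Sstar, (F (insert x (S i)) - F (S i))
        ≤ ∑ _x ∈ Sstar, δ := by
          apply Finset.sum_le_sum
          intro x _
          rw [hδ, hSi1]
          exact hgreedy i x
      _ = (k : ℝ) * δ := by rw [Finset.sum_const, hcard, nsmul_eq_mul]
  have hkey : F Sstar - F (S i) ≤ (k : ℝ) * δ := by linarith
  have hkpos : (0 : ℝ) < (k : ℝ) := by exact_mod_cast hk
  have hk1 : (1 : ℝ) ≤ (k : ℝ) := by exact_mod_cast hk
  have : F Sstar - F (S (i+1)) = (F Sstar - F (S i)) - δ := by rw [hδ]; ring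
  rw [this]
  have hdiv : (1 / (k : ℝ)) * (F Sstar - F (S i)) ≤ δ := by
    rw [div_mul_eq_mul_div, one_mul, div_le_iff₀ hkpos]
    linarith [hkey]
  nlinarith [hdiv]
end

section
/- Let μ₀, μ₁ be probability measures on ℝ with quantile functions Q₀, Q₁, and λ ∈ [0,1]. Define μ_λ as the law of (1−λ)Q₀(U) + λQ₁(U) where U is uniform on [0,1]. Then μ_λ minimizes (1−λ)W_2²(μ, μ₀) + λ W_2²(μ, μ₁) over probability measures μ on ℝ with finite second moment; i.e., the 2-Wasserstein barycenter of two 1D measures has quantile function (1−λ)Q₀ + λQ₁. -/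
open MeasureTheory ENNReal

/-- The set of couplings (transport plans) of `μ` and `ν`. -/
def couplings {Ω : Type*} [MeasurableSpace Ω] (μ ν : MeasureTheory.Measure Ω) :
    Set (MeasureTheory.Measure (Ω × Ω)) :=
  {γ | γ.map Prod.fst = μ ∧ γ.map Prod.snd = ν}

/-- The `p`-th power of the `p`-Wasserstein distance: the optimal transport cost
with cost `D^p`. -/
noncomputable def wassersteinPow {Ω : Type*} [MeasurableSpace Ω] (D : Ω → Ω → ℝ) (p : ℝ)
    (μ ν : MeasureTheory.Measure Ω) : ℝ≥0∞ :=
  ⨅ (γ : MeasureTheory.Measure (Ω × Ω)) (_ : γ ∈ couplings μ ν),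
    ∫⁻ z, ENNReal.ofReal (D z.1 z.2) ^ p ∂γ
/-- The quantile (generalized inverse CDF) of a measure on `ℝ`. -/
noncomputable def quantile (μ : MeasureTheory.Measure ℝ) (t : ℝ) : ℝ :=
  sInf {x : ℝ | t ≤ (μ (Set.Iic x)).toReal}


open Set Filter ProbabilityTheory
open scoped Topology

section basic
variable {μ : Measure ℝ} [IsProbabilityMeasure μ]

lemma quantile_eq (μ : Measure ℝ) [IsProbabilityMeasure μ] (t : ℝ) :
    quantile μ t = sInf {x : ℝ | t ≤ cdf μ x} := by
  simp only [quantile, cdf_eq_real, measureReal_def]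

lemma qset_nonempty {t : ℝ} (ht : t < 1) : {x : ℝ | t ≤ cdf μ x}.Nonempty :=
  ((tendsto_cdf_atTop μ).eventually (eventually_ge_nhds ht)).exists

lemma qset_bddBelow {t : ℝ} (ht : 0 < t) : BddBelow {x : ℝ | t ≤ cdf μ x} := by
  obtain ⟨b, hb⟩ := ((tendsto_cdf_atBot μ).eventually (eventually_lt_nhds ht)).exists
  exact ⟨b, fun x hx => by
    by_contra h
    exact absurd (le_trans hx ((cdf μ).mono (le_of_not_ge h))) (not_le.2 hb)⟩

lemma cdf_quantile_ge {t : ℝ} (ht0 : 0 < t) (ht1 : t < 1) : t ≤ cdf μ (quantile μ t) := by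
  rw [quantile_eq]
  set S := {x : ℝ | t ≤ cdf μ x} with hS
  have hne : S.Nonempty := qset_nonempty ht1
  have hbd : BddBelow S := qset_bddBelow ht0
  -- right continuity: cdf (sInf S) = liminf over x → sInf S from the right
  have hrc : ContinuousWithinAt (cdf μ) (Ici (sInf S)) (sInf S) := (cdf μ).right_continuous _
  -- for each n, there is x ∈ S with x < sInf S + 1/(n+1)
  have key : ∀ ε > (0:ℝ), t ≤ cdf μ (sInf S) + ε := by
    intro ε hε
    have h2 : ∀ᶠ x in 𝓝[Ici (sInf S)] (sInf S), cdf μ x < cdf μ (sInf S) + ε :=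
      hrc.eventually (eventually_lt_nhds (by linarith))
    rw [eventually_nhdsWithin_iff, Metric.eventually_nhds_iff] at h2
    obtain ⟨δ, hδ, hball⟩ := h2
    obtain ⟨x, hxS, hxlt⟩ := Real.lt_sInf_add_pos hne hδ
    have hx1 : sInf S ≤ x := csInf_le hbd hxS
    have : cdf μ x < cdf μ (sInf S) + ε := by
      apply hball ?_ hx1
      rw [Real.dist_eq, abs_of_nonneg (by linarith)]; linarith
    have hxS' : t ≤ cdf μ x := hxS
    linarith
  exact le_of_forall_pos_le_add key

lemma quantile_le_iff {t x : ℝ} (ht0 : 0 < t) (ht1 : t < 1) :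
    quantile μ t ≤ x ↔ t ≤ cdf μ x := by
  constructor
  · intro h
    exact le_trans (cdf_quantile_ge ht0 ht1) ((cdf μ).mono h)
  · intro h
    rw [quantile_eq]
    exact csInf_le (qset_bddBelow ht0) h

lemma monotoneOn_quantile : MonotoneOn (quantile μ) (Ioo (0:ℝ) 1) := by
  intro a ha b hb hab
  rw [quantile_eq, quantile_eq]
  exact csInf_le_csInf (qset_bddBelow ha.1) (qset_nonempty hb.2)
    (fun x hx => le_trans hab hx)

end basic

section push
variable {μ : Measure ℝ} [IsProbabilityMeasure μ]
lemma aemeasurable_quantile (μ : Measure ℝ) [IsProbabilityMeasure μ] :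
    AEMeasurable (quantile μ) (volume.restrict (Ioo (0:ℝ) 1)) :=
  aemeasurable_restrict_of_monotoneOn measurableSet_Ioo monotoneOn_quantile

lemma preimage_quantile_Iic (x : ℝ) :
    quantile μ ⁻¹' Iic x ∩ Ioo (0:ℝ) 1 = if cdf μ x < 1 then Ioc 0 (cdf μ x) else Ioo 0 1 := by
  split_ifs with hc
  · ext t
    simp only [mem_inter_iff, mem_preimage, mem_Iic, mem_Ioo, mem_Ioc]
    constructor
    · rintro ⟨hq, ht0, ht1⟩
      exact ⟨ht0, (quantile_le_iff ht0 ht1).mp hq⟩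
    · rintro ⟨ht0, htc⟩
      have ht1 : t < 1 := lt_of_le_of_lt htc hc
      exact ⟨(quantile_le_iff ht0 ht1).mpr htc, ht0, ht1⟩
  · have hc1 : cdf μ x = 1 := le_antisymm (cdf_le_one μ x) (not_lt.mp hc)
    ext t
    simp only [mem_inter_iff, mem_preimage, mem_Iic, mem_Ioo]
    constructor
    · rintro ⟨_, h⟩; exact h
    · rintro ⟨ht0, ht1⟩
      exact ⟨(quantile_le_iff ht0 ht1).mpr (by rw [hc1]; exact ht1.le), ht0, ht1⟩

lemma map_quantile (μ : Measure ℝ) [IsProbabilityMeasure μ] :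
    (volume.restrict (Ioo (0:ℝ) 1)).map (quantile μ) = μ := by
  have ham := aemeasurable_quantile μ
  have hprob : IsProbabilityMeasure ((volume.restrict (Ioo (0:ℝ) 1)).map (quantile μ)) := by
    constructor
    rw [Measure.map_apply_of_aemeasurable ham MeasurableSet.univ]
    simp [Real.volume_Ioo]
  refine Measure.ext_of_Iic _ μ (fun x => ?_)
  rw [Measure.map_apply_of_aemeasurable ham measurableSet_Iic,
    Measure.restrict_apply' measurableSet_Ioo, preimage_quantile_Iic]
  split_ifs with hc
  · rw [Real.volume_Ioc, ← ofReal_cdf μ x, sub_zero]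
  · have hc1 : cdf μ x = 1 := le_antisymm (cdf_le_one μ x) (not_lt.mp hc)
    rw [Real.volume_Ioo, ← ofReal_cdf μ x, hc1]
    norm_num

end push



noncomputable def ee (x s : ℝ) : ℝ :=
  (if s < x then 1 else 0) - (if s < 0 then 1 else 0)

lemma ee_of_nonneg {x : ℝ} (hx : 0 ≤ x) : ee x = (Ico (0:ℝ) x).indicator 1 := by
  funext s
  simp only [ee, indicator, mem_Ico, Pi.one_apply]
  split_ifs <;> simp_all <;> linarith

lemma ee_of_neg {x : ℝ} (hx : x < 0) : ee x = fun s => -((Ico x 0).indicator 1 s) := by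
  funext s
  simp only [ee, indicator, mem_Ico, Pi.one_apply]
  split_ifs <;> simp_all <;> linarith

lemma abs_ee (x : ℝ) : (fun s => |ee x s|) = (Ico (min x 0) (max x 0)).indicator 1 := by
  rcases le_or_gt 0 x with h | h
  · rw [ee_of_nonneg h, min_eq_right h, max_eq_left h]
    funext s; simp only [indicator, Pi.one_apply]; split_ifs <;> simp
  · rw [ee_of_neg h, min_eq_left h.le, max_eq_right h.le]
    funext s; simp only [indicator, Pi.one_apply]; split_ifs <;> simp

lemma integrable_ee (x : ℝ) : Integrable (ee x) (volume : Measure ℝ) := by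
  rcases le_or_gt 0 x with h | h
  · rw [ee_of_nonneg h]
    exact (integrable_indicator_iff measurableSet_Ico).mpr
      (integrableOn_const (by rw [Real.volume_Ico]; exact ofReal_ne_top))
  · rw [ee_of_neg h]
    exact Integrable.neg ((integrable_indicator_iff measurableSet_Ico).mpr
      (integrableOn_const (by rw [Real.volume_Ico]; exact ofReal_ne_top)))

lemma integral_ee (x : ℝ) : ∫ s, ee x s = x := by
  rcases le_or_gt 0 x with h | h
  · rw [ee_of_nonneg h, integral_indicator_one measurableSet_Ico,
      Real.volume_real_Ico_of_le (by linarith)]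
    ring
  · rw [ee_of_neg h, integral_neg, integral_indicator_one measurableSet_Ico,
      Real.volume_real_Ico_of_le (by linarith)]
    ring

lemma integral_abs_ee (x : ℝ) : ∫ s, |ee x s| = |x| := by
  rw [abs_ee, integral_indicator_one measurableSet_Ico]
  rcases le_or_gt 0 x with h | h
  · rw [min_eq_right h, max_eq_left h, Real.volume_real_Ico_of_le (by linarith), abs_of_nonneg h]; ring
  · rw [min_eq_left h.le, max_eq_right h.le, Real.volume_real_Ico_of_le (by linarith),
      abs_of_neg h]; ring

lemma measurable_ee : Measurable (fun p : ℝ × ℝ => ee p.1 p.2) := by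
  unfold ee
  apply Measurable.sub
  · exact Measurable.ite (measurableSet_lt measurable_snd measurable_fst)
      measurable_const measurable_const
  · exact Measurable.ite (measurableSet_lt measurable_snd measurable_const)
      measurable_const measurable_const

section couplings
variable {μ ν : Measure ℝ} [IsProbabilityMeasure μ] [IsProbabilityMeasure ν]
  {γ : Measure (ℝ × ℝ)}

lemma couplings_isProb (hγ : γ ∈ couplings μ ν) : IsProbabilityMeasure γ := by
  constructor
  have h : γ.map Prod.fst univ = 1 := by rw [hγ.1]; exact measure_univ
  rwa [Measure.map_apply measurable_fst MeasurableSet.univ, preimage_univ] at h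

lemma couplings_fst_apply (hγ : γ ∈ couplings μ ν) {s : Set ℝ} (hs : MeasurableSet s) :
    γ (s ×ˢ univ) = μ s := by
  rw [← hγ.1, Measure.map_apply measurable_fst hs, Set.prod_univ]

lemma couplings_snd_apply (hγ : γ ∈ couplings μ ν) {s : Set ℝ} (hs : MeasurableSet s) :
    γ (univ ×ˢ s) = ν s := by
  rw [← hγ.2, Measure.map_apply measurable_snd hs, Set.univ_prod]

lemma measure_Ioi_eq (μ : Measure ℝ) [IsProbabilityMeasure μ] (s : ℝ) :
    μ (Ioi s) = ENNReal.ofReal (1 - cdf μ s) := by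
  have h : Ioi s = (Iic s)ᶜ := by ext; simp
  rw [h, measure_compl measurableSet_Iic (measure_ne_top _ _), ← ofReal_cdf μ s,
    measure_univ, ← ENNReal.ofReal_one, ENNReal.ofReal_sub _ (cdf_nonneg μ s)]

/-- The monotone (comonotone) coupling. -/
noncomputable def monCoupling (μ ν : Measure ℝ) : Measure (ℝ × ℝ) :=
  (volume.restrict (Ioo (0:ℝ) 1)).map (fun t => (quantile μ t, quantile ν t))

lemma aemeasurable_pair (μ ν : Measure ℝ) [IsProbabilityMeasure μ] [IsProbabilityMeasure ν] :
    AEMeasurable (fun t => (quantile μ t, quantile ν t)) (volume.restrict (Ioo (0:ℝ) 1)) :=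
  (aemeasurable_quantile μ).prodMk (aemeasurable_quantile ν)

lemma monCoupling_mem : monCoupling μ ν ∈ couplings μ ν := by
  constructor
  · rw [monCoupling, AEMeasurable.map_map_of_aemeasurable measurable_fst.aemeasurable
      (aemeasurable_pair μ ν)]
    exact map_quantile μ
  · rw [monCoupling, AEMeasurable.map_map_of_aemeasurable measurable_snd.aemeasurable
      (aemeasurable_pair μ ν)]
    exact map_quantile ν

lemma monCoupling_survival (s u : ℝ) :
    monCoupling μ ν (Ioi s ×ˢ Ioi u) = ENNReal.ofReal (1 - max (cdf μ s) (cdf ν u)) := by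
  rw [monCoupling, Measure.map_apply_of_aemeasurable (aemeasurable_pair μ ν)
    (measurableSet_Ioi.prod measurableSet_Ioi), Measure.restrict_apply' measurableSet_Ioo]
  have hset : (fun t => (quantile μ t, quantile ν t)) ⁻¹' (Ioi s ×ˢ Ioi u) ∩ Ioo (0:ℝ) 1
      = Ioo (max (cdf μ s) (cdf ν u)) 1 := by
    ext t
    simp only [mem_inter_iff, mem_preimage, mem_prod, mem_Ioi, mem_Ioo, max_lt_iff]
    constructor
    · rintro ⟨⟨h1, h2⟩, ht0, ht1⟩
      refine ⟨⟨?_, ?_⟩, ht1⟩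
      · by_contra h; exact absurd ((quantile_le_iff ht0 ht1).mpr (not_lt.mp h)) (not_le.mpr h1)
      · by_contra h; exact absurd ((quantile_le_iff ht0 ht1).mpr (not_lt.mp h)) (not_le.mpr h2)
    · rintro ⟨⟨h1, h2⟩, ht1⟩
      have ht0 : 0 < t := lt_of_le_of_lt (cdf_nonneg μ s) h1
      refine ⟨⟨?_, ?_⟩, ht0, ht1⟩
      · by_contra h
        exact absurd ((quantile_le_iff ht0 ht1).mp (not_lt.mp h)) (not_le.mpr h1)
      · by_contra h
        exact absurd ((quantile_le_iff ht0 ht1).mp (not_lt.mp h)) (not_le.mpr h2)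
  rw [hset, Real.volume_Ioo]

lemma survival_le (hγ : γ ∈ couplings μ ν) (s u : ℝ) :
    γ (Ioi s ×ˢ Ioi u) ≤ monCoupling μ ν (Ioi s ×ˢ Ioi u) := by
  rw [monCoupling_survival]
  rcases le_total (cdf μ s) (cdf ν u) with h | h
  · rw [max_eq_right h, ← measure_Ioi_eq ν u, ← couplings_snd_apply hγ measurableSet_Ioi]
    exact measure_mono (Set.prod_mono (subset_univ _) subset_rfl)
  · rw [max_eq_left h, ← measure_Ioi_eq μ s, ← couplings_fst_apply hγ measurableSet_Ioi]
    exact measure_mono (Set.prod_mono subset_rfl (subset_univ _))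

end couplings

section hoeffding
variable {μ ν : Measure ℝ} [IsProbabilityMeasure μ] [IsProbabilityMeasure ν]
  {γ : Measure (ℝ × ℝ)}

lemma integrable_sq_fst (hγ : γ ∈ couplings μ ν) (h2μ : ∫⁻ x, ENNReal.ofReal (x ^ 2) ∂μ < ⊤) :
    Integrable (fun z : ℝ × ℝ => z.1 ^ 2) γ := by
  have hm : Measurable (fun z : ℝ × ℝ => z.1 ^ 2) := (measurable_fst.pow_const 2)
  refine ⟨hm.aestronglyMeasurable, ?_⟩
  rw [hasFiniteIntegral_iff_ofReal (Eventually.of_forall (fun z => sq_nonneg _))]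
  have : ∫⁻ z : ℝ × ℝ, ENNReal.ofReal (z.1 ^ 2) ∂γ = ∫⁻ x, ENNReal.ofReal (x ^ 2) ∂(γ.map Prod.fst) := by
    rw [lintegral_map (by measurability) measurable_fst]
  rw [this, hγ.1]; exact h2μ

lemma integrable_sq_snd (hγ : γ ∈ couplings μ ν) (h2ν : ∫⁻ x, ENNReal.ofReal (x ^ 2) ∂ν < ⊤) :
    Integrable (fun z : ℝ × ℝ => z.2 ^ 2) γ := by
  have hm : Measurable (fun z : ℝ × ℝ => z.2 ^ 2) := (measurable_snd.pow_const 2)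
  refine ⟨hm.aestronglyMeasurable, ?_⟩
  rw [hasFiniteIntegral_iff_ofReal (Eventually.of_forall (fun z => sq_nonneg _))]
  have : ∫⁻ z : ℝ × ℝ, ENNReal.ofReal (z.2 ^ 2) ∂γ = ∫⁻ x, ENNReal.ofReal (x ^ 2) ∂(γ.map Prod.snd) := by
    rw [lintegral_map (by measurability) measurable_snd]
  rw [this, hγ.2]; exact h2ν

lemma integrable_abs_mul (hγ : γ ∈ couplings μ ν)
    (h2μ : ∫⁻ x, ENNReal.ofReal (x ^ 2) ∂μ < ⊤) (h2ν : ∫⁻ x, ENNReal.ofReal (x ^ 2) ∂ν < ⊤) :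
    Integrable (fun z : ℝ × ℝ => |z.1| * |z.2|) γ := by
  refine Integrable.mono' (((integrable_sq_fst hγ h2μ).add (integrable_sq_snd hγ h2ν)).div_const 2)
    ((measurable_fst.abs.mul measurable_snd.abs).aestronglyMeasurable)
    (Eventually.of_forall (fun z => ?_))
  rw [Real.norm_eq_abs, abs_of_nonneg (by positivity)]
  simp only [Pi.add_apply]
  nlinarith [sq_nonneg (|z.1| - |z.2|), sq_abs z.1, sq_abs z.2]

lemma integrable_mul (hγ : γ ∈ couplings μ ν)
    (h2μ : ∫⁻ x, ENNReal.ofReal (x ^ 2) ∂μ < ⊤) (h2ν : ∫⁻ x, ENNReal.ofReal (x ^ 2) ∂ν < ⊤) :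
    Integrable (fun z : ℝ × ℝ => z.1 * z.2) γ := by
  refine Integrable.mono' (integrable_abs_mul hγ h2μ h2ν)
    ((measurable_fst.mul measurable_snd).aestronglyMeasurable)
    (Eventually.of_forall (fun z => ?_))
  rw [Real.norm_eq_abs, abs_mul]

lemma integrable_cost (hγ : γ ∈ couplings μ ν)
    (h2μ : ∫⁻ x, ENNReal.ofReal (x ^ 2) ∂μ < ⊤) (h2ν : ∫⁻ x, ENNReal.ofReal (x ^ 2) ∂ν < ⊤) :
    Integrable (fun z : ℝ × ℝ => (z.1 - z.2) ^ 2) γ := by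
  have h : (fun z : ℝ × ℝ => (z.1 - z.2) ^ 2)
      = fun z => z.1 ^ 2 + z.2 ^ 2 - 2 * (z.1 * z.2) := by funext z; ring
  rw [h]
  exact ((integrable_sq_fst hγ h2μ).add (integrable_sq_snd hγ h2ν)).sub
    ((integrable_mul hγ h2μ h2ν).const_mul 2)

lemma integral_ee_section (hγ : γ ∈ couplings μ ν) (s u : ℝ) :
    ∫ z : ℝ × ℝ, ee z.1 s * ee z.2 u ∂γ
      = (γ (Ioi s ×ˢ Ioi u)).toReal
        - (if s < 0 then (1:ℝ) else 0) * (ν (Ioi u)).toReal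
        - (if u < 0 then (1:ℝ) else 0) * (μ (Ioi s)).toReal
        + (if s < 0 then (1:ℝ) else 0) * (if u < 0 then (1:ℝ) else 0) := by
  haveI : IsProbabilityMeasure γ := couplings_isProb hγ
  set a : ℝ := if s < 0 then 1 else 0 with ha
  set b : ℝ := if u < 0 then 1 else 0 with hb
  have hpt : ∀ z : ℝ × ℝ, ee z.1 s * ee z.2 u
      = (Ioi s ×ˢ Ioi u).indicator 1 z - a * ((univ ×ˢ Ioi u).indicator 1 z)
        - b * ((Ioi s ×ˢ univ).indicator 1 z) + a * b := by
    intro z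
    simp only [ee, indicator, mem_prod, mem_Ioi, mem_univ, true_and, and_true, Pi.one_apply, ha, hb]
    split_ifs <;> simp_all <;> ring
  have hint : ∀ (S : Set (ℝ × ℝ)), MeasurableSet S → Integrable (S.indicator (1 : ℝ × ℝ → ℝ)) γ :=
    fun S hS => (integrable_indicator_iff hS).mpr
      (integrableOn_const (measure_ne_top γ S))
  have hSuv : MeasurableSet (Ioi s ×ˢ Ioi u) := measurableSet_Ioi.prod measurableSet_Ioi
  have hSu : MeasurableSet ((univ : Set ℝ) ×ˢ Ioi u) := MeasurableSet.univ.prod measurableSet_Ioi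
  have hSv : MeasurableSet (Ioi s ×ˢ (univ : Set ℝ)) := measurableSet_Ioi.prod MeasurableSet.univ
  calc ∫ z : ℝ × ℝ, ee z.1 s * ee z.2 u ∂γ
      = ∫ z : ℝ × ℝ, ((Ioi s ×ˢ Ioi u).indicator 1 z - a * ((univ ×ˢ Ioi u).indicator 1 z)
        - b * ((Ioi s ×ˢ univ).indicator 1 z) + a * b) ∂γ := by
        exact integral_congr_ae (Eventually.of_forall hpt)
    _ = (γ (Ioi s ×ˢ Ioi u)).toReal - a * (ν (Ioi u)).toReal - b * (μ (Ioi s)).toReal + a * b := by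
        have I1 : Integrable (fun z : ℝ × ℝ => (Ioi s ×ˢ Ioi u).indicator 1 z) γ := hint _ hSuv
        have I2 : Integrable (fun z : ℝ × ℝ => a * ((univ ×ˢ Ioi u).indicator 1 z)) γ :=
          (hint _ hSu).const_mul a
        have I3 : Integrable (fun z : ℝ × ℝ => b * ((Ioi s ×ˢ univ).indicator 1 z)) γ :=
          (hint _ hSv).const_mul b
        have e1 := integral_add ((I1.sub I2).sub I3) (integrable_const (a * b) (μ := γ))
        have e2 := integral_sub (I1.sub I2) I3
        have e3 := integral_sub I1 I2
        simp only [Pi.sub_apply] at e1 e2 e3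
        rw [e1, e2, e3, integral_const_mul, integral_const_mul, integral_const,
          integral_indicator_one hSuv, integral_indicator_one hSu, integral_indicator_one hSv]
        simp only [measureReal_def]
        rw [
          couplings_snd_apply hγ measurableSet_Ioi, couplings_fst_apply hγ measurableSet_Ioi,
          measure_univ]
        simp

end hoeffding

section hoeffding2
variable {μ ν : Measure ℝ} [IsProbabilityMeasure μ] [IsProbabilityMeasure ν]
  {γ γ' : Measure (ℝ × ℝ)}
  (h2μ : ∫⁻ x, ENNReal.ofReal (x ^ 2) ∂μ < ⊤) (h2ν : ∫⁻ x, ENNReal.ofReal (x ^ 2) ∂ν < ⊤)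
include h2μ h2ν

lemma hoeffding_integrable_big (hγ : γ ∈ couplings μ ν) :
    Integrable (fun p : (ℝ × ℝ) × (ℝ × ℝ) => ee p.1.1 p.2.1 * ee p.1.2 p.2.2)
      (γ.prod ((volume : Measure ℝ).prod (volume : Measure ℝ))) := by
  haveI := couplings_isProb hγ
  have hfm : Measurable (fun p : (ℝ × ℝ) × (ℝ × ℝ) => ee p.1.1 p.2.1 * ee p.1.2 p.2.2) :=
    (measurable_ee.comp ((measurable_fst.comp measurable_fst).prodMk
        (measurable_fst.comp measurable_snd))).mul
      (measurable_ee.comp ((measurable_snd.comp measurable_fst).prodMk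
        (measurable_snd.comp measurable_snd)))
  rw [integrable_prod_iff hfm.aestronglyMeasurable]
  constructor
  · exact Eventually.of_forall (fun z => (integrable_ee z.1).mul_prod (integrable_ee z.2))
  · have h : (fun z : ℝ × ℝ => ∫ w : ℝ × ℝ, ‖ee z.1 w.1 * ee z.2 w.2‖
        ∂((volume : Measure ℝ).prod (volume : Measure ℝ))) = fun z => |z.1| * |z.2| := by
      funext z
      simp only [norm_mul, Real.norm_eq_abs]
      rw [integral_prod_mul (fun s => |ee z.1 s|) (fun u => |ee z.2 u|), integral_abs_ee,
        integral_abs_ee]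
    rw [h]
    exact integrable_abs_mul hγ h2μ h2ν

lemma hoeffding_swap (hγ : γ ∈ couplings μ ν) :
    ∫ z : ℝ × ℝ, z.1 * z.2 ∂γ
      = ∫ w : ℝ × ℝ, (∫ z : ℝ × ℝ, ee z.1 w.1 * ee z.2 w.2 ∂γ)
          ∂((volume : Measure ℝ).prod (volume : Measure ℝ)) := by
  haveI := couplings_isProb hγ
  have h1 : ∫ z : ℝ × ℝ, z.1 * z.2 ∂γ
      = ∫ z : ℝ × ℝ, (∫ w : ℝ × ℝ, ee z.1 w.1 * ee z.2 w.2
          ∂((volume : Measure ℝ).prod (volume : Measure ℝ))) ∂γ := by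
    congr 1
    funext z
    rw [integral_prod_mul (fun s => ee z.1 s) (fun u => ee z.2 u), integral_ee, integral_ee]
  rw [h1]
  exact integral_integral_swap (hoeffding_integrable_big h2μ h2ν hγ)

lemma hoeffding_mul_le (hγ : γ ∈ couplings μ ν) (hγ' : γ' ∈ couplings μ ν)
    (hS : ∀ s u : ℝ, γ (Ioi s ×ˢ Ioi u) ≤ γ' (Ioi s ×ˢ Ioi u)) :
    ∫ z : ℝ × ℝ, z.1 * z.2 ∂γ ≤ ∫ z : ℝ × ℝ, z.1 * z.2 ∂γ' := by
  haveI := couplings_isProb hγ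
  haveI := couplings_isProb hγ'
  rw [hoeffding_swap h2μ h2ν hγ, hoeffding_swap h2μ h2ν hγ']
  refine integral_mono ((hoeffding_integrable_big h2μ h2ν hγ).integral_prod_right)
    ((hoeffding_integrable_big h2μ h2ν hγ').integral_prod_right) (fun w => ?_)
  rw [integral_ee_section hγ w.1 w.2, integral_ee_section hγ' w.1 w.2]
  have := ENNReal.toReal_le_toReal (measure_ne_top γ (Ioi w.1 ×ˢ Ioi w.2))
    (measure_ne_top γ' (Ioi w.1 ×ˢ Ioi w.2)) |>.mpr (hS w.1 w.2)
  linarith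

lemma integral_sq_fst_eq (hγ : γ ∈ couplings μ ν) :
    ∫ z : ℝ × ℝ, z.1 ^ 2 ∂γ = ∫ x, x ^ 2 ∂μ := by
  rw [← hγ.1, integral_map measurable_fst.aemeasurable
    (by fun_prop : AEStronglyMeasurable (fun x : ℝ => x ^ 2) (Measure.map Prod.fst γ))]

lemma integral_sq_snd_eq (hγ : γ ∈ couplings μ ν) :
    ∫ z : ℝ × ℝ, z.2 ^ 2 ∂γ = ∫ x, x ^ 2 ∂ν := by
  rw [← hγ.2, integral_map measurable_snd.aemeasurable
    (by fun_prop : AEStronglyMeasurable (fun x : ℝ => x ^ 2) (Measure.map Prod.snd γ))]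

lemma integral_cost_expand (hγ : γ ∈ couplings μ ν) :
    ∫ z : ℝ × ℝ, (z.1 - z.2) ^ 2 ∂γ
      = (∫ x, x ^ 2 ∂μ) + (∫ x, x ^ 2 ∂ν) - 2 * ∫ z : ℝ × ℝ, z.1 * z.2 ∂γ := by
  have h1 : ∫ z : ℝ × ℝ, (z.1 - z.2) ^ 2 ∂γ
      = ∫ z : ℝ × ℝ, (z.1 ^ 2 + z.2 ^ 2 - 2 * (z.1 * z.2)) ∂γ := by
    congr 1; funext z; ring
  have esub := integral_sub ((integrable_sq_fst hγ h2μ).add (integrable_sq_snd hγ h2ν))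
    ((integrable_mul hγ h2μ h2ν).const_mul 2)
  have eadd := integral_add (integrable_sq_fst hγ h2μ) (integrable_sq_snd hγ h2ν)
  simp only [Pi.add_apply] at esub
  rw [h1, esub, eadd, integral_const_mul, integral_sq_fst_eq h2μ h2ν hγ, integral_sq_snd_eq h2μ h2ν hγ]

lemma cost_mono (hγ : γ ∈ couplings μ ν) :
    ∫⁻ z : ℝ × ℝ, ENNReal.ofReal ((z.1 - z.2) ^ 2) ∂(monCoupling μ ν)
      ≤ ∫⁻ z : ℝ × ℝ, ENNReal.ofReal ((z.1 - z.2) ^ 2) ∂γ := by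
  haveI := couplings_isProb hγ
  haveI := couplings_isProb (monCoupling_mem (μ := μ) (ν := ν))
  rw [← ofReal_integral_eq_lintegral_ofReal (integrable_cost monCoupling_mem h2μ h2ν)
      (Eventually.of_forall (fun z => sq_nonneg _)),
    ← ofReal_integral_eq_lintegral_ofReal (integrable_cost hγ h2μ h2ν)
      (Eventually.of_forall (fun z => sq_nonneg _))]
  apply ENNReal.ofReal_le_ofReal
  rw [integral_cost_expand h2μ h2ν hγ, integral_cost_expand h2μ h2ν monCoupling_mem]
  have := hoeffding_mul_le h2μ h2ν hγ monCoupling_mem (survival_le hγ)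
  linarith

end hoeffding2

lemma cost_rpow (γ : Measure (ℝ × ℝ)) :
    ∫⁻ z, ENNReal.ofReal (dist z.1 z.2) ^ (2:ℝ) ∂γ
      = ∫⁻ z : ℝ × ℝ, ENNReal.ofReal ((z.1 - z.2) ^ 2) ∂γ := by
  apply lintegral_congr
  intro z
  rw [show (2:ℝ) = ((2:ℕ):ℝ) by norm_num, ENNReal.rpow_natCast,
    ← ENNReal.ofReal_pow dist_nonneg, Real.dist_eq, sq_abs]

lemma wass_le_cost (ρ σ : Measure ℝ) (γ : Measure (ℝ × ℝ)) (hγ : γ ∈ couplings ρ σ) :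
    wassersteinPow dist 2 ρ σ ≤ ∫⁻ z : ℝ × ℝ, ENNReal.ofReal ((z.1 - z.2) ^ 2) ∂γ :=
  (iInf₂_le γ hγ).trans_eq (cost_rpow γ)

lemma cost_le_wass (ρ σ : Measure ℝ) [IsProbabilityMeasure ρ] [IsProbabilityMeasure σ]
    (h2ρ : ∫⁻ x, ENNReal.ofReal (x ^ 2) ∂ρ < ⊤) (h2σ : ∫⁻ x, ENNReal.ofReal (x ^ 2) ∂σ < ⊤) :
    ∫⁻ t in Ioo (0:ℝ) 1, ENNReal.ofReal ((quantile ρ t - quantile σ t) ^ 2) ∂volume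
      ≤ wassersteinPow dist 2 ρ σ := by
  refine le_iInf₂ (fun γ hγ => ?_)
  rw [cost_rpow γ]
  refine le_trans (le_of_eq ?_) (cost_mono h2ρ h2σ hγ)
  rw [monCoupling, lintegral_map'
    ((by fun_prop : Measurable (fun z : ℝ × ℝ => ENNReal.ofReal ((z.1 - z.2) ^ 2))).aemeasurable)
    ((aemeasurable_quantile ρ).prodMk (aemeasurable_quantile σ))]


/-- The 2-Wasserstein barycenter of two 1D measures is the law of the interpolated
quantile function `(1−λ)Q₀ + λQ₁` applied to a uniform variable on `(0,1)`: it minimizes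
`(1−λ)W₂²(·, μ₀) + λW₂²(·, μ₁)` over probability measures with finite second moment. -/
theorem one_dim_barycenter_quantile
    (μ₀ μ₁ : MeasureTheory.Measure ℝ)
    [IsProbabilityMeasure μ₀] [IsProbabilityMeasure μ₁]
    (hμ₀ : ∫⁻ x, ENNReal.ofReal (x ^ 2) ∂μ₀ < ⊤)
    (hμ₁ : ∫⁻ x, ENNReal.ofReal (x ^ 2) ∂μ₁ < ⊤)
    (lam : ℝ) (h0 : 0 ≤ lam) (h1 : lam ≤ 1) :
    ∀ μ : MeasureTheory.Measure ℝ, IsProbabilityMeasure μ →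
      ∫⁻ x, ENNReal.ofReal (x ^ 2) ∂μ < ⊤ →
      ENNReal.ofReal (1 - lam) *
          wassersteinPow dist 2
            ((MeasureTheory.volume.restrict (Set.Ioo (0 : ℝ) 1)).map
              (fun t => (1 - lam) * quantile μ₀ t + lam * quantile μ₁ t)) μ₀
        + ENNReal.ofReal lam *
          wassersteinPow dist 2
            ((MeasureTheory.volume.restrict (Set.Ioo (0 : ℝ) 1)).map
              (fun t => (1 - lam) * quantile μ₀ t + lam * quantile μ₁ t)) μ₁
      ≤ ENNReal.ofReal (1 - lam) * wassersteinPow dist 2 μ μ₀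
        + ENNReal.ofReal lam * wassersteinPow dist 2 μ μ₁ := by
  intro μ hμprob h2μ
  set P : Measure ℝ := volume.restrict (Ioo (0:ℝ) 1) with hP
  set q : ℝ → ℝ := fun t => (1 - lam) * quantile μ₀ t + lam * quantile μ₁ t with hq
  have hqm : AEMeasurable q P :=
    ((aemeasurable_quantile μ₀).const_mul _).add ((aemeasurable_quantile μ₁).const_mul _)
  -- upper bound for the LHS Wasserstein terms
  have hub : ∀ (σ : Measure ℝ) (_ : IsProbabilityMeasure σ)
      (_ : AEMeasurable (quantile σ) P)
      (_ : (P.map (quantile σ)) = σ),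
      wassersteinPow dist 2 (P.map q) σ
        ≤ ∫⁻ t in Ioo (0:ℝ) 1, ENNReal.ofReal ((q t - quantile σ t) ^ 2) ∂volume := by
    intro σ hσp hσm hσmap
    have hpair : AEMeasurable (fun t => (q t, quantile σ t)) P := hqm.prodMk hσm
    have hmem : P.map (fun t => (q t, quantile σ t)) ∈ couplings (P.map q) σ := by
      constructor
      · rw [AEMeasurable.map_map_of_aemeasurable measurable_fst.aemeasurable hpair]; rfl
      · rw [AEMeasurable.map_map_of_aemeasurable measurable_snd.aemeasurable hpair]; exact hσmap
    refine (wass_le_cost _ _ _ hmem).trans_eq ?_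
    rw [lintegral_map' ((by fun_prop : Measurable (fun z : ℝ × ℝ =>
      ENNReal.ofReal ((z.1 - z.2) ^ 2))).aemeasurable) hpair]
  have hub0 := hub μ₀ inferInstance (aemeasurable_quantile μ₀) (map_quantile μ₀)
  have hub1 := hub μ₁ inferInstance (aemeasurable_quantile μ₁) (map_quantile μ₁)
  -- lower bounds for the RHS Wasserstein terms
  have hlb0 := cost_le_wass μ μ₀ h2μ hμ₀
  have hlb1 := cost_le_wass μ μ₁ h2μ hμ₁
  -- AEMeasurability of the various integrands
  have hae : ∀ f g : ℝ → ℝ, AEMeasurable f P → AEMeasurable g P →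
      AEMeasurable (fun t => ENNReal.ofReal ((f t - g t) ^ 2)) P := fun f g hf hg =>
    (ENNReal.measurable_ofReal.comp_aemeasurable ((hf.sub hg).pow_const 2))
  calc ENNReal.ofReal (1 - lam) * wassersteinPow dist 2 (P.map q) μ₀
        + ENNReal.ofReal lam * wassersteinPow dist 2 (P.map q) μ₁
      ≤ ENNReal.ofReal (1 - lam) * ∫⁻ t in Ioo (0:ℝ) 1, ENNReal.ofReal ((q t - quantile μ₀ t) ^ 2) ∂volume
        + ENNReal.ofReal lam * ∫⁻ t in Ioo (0:ℝ) 1, ENNReal.ofReal ((q t - quantile μ₁ t) ^ 2) ∂volume := by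
        gcongr
    _ = ∫⁻ t in Ioo (0:ℝ) 1, (ENNReal.ofReal (1 - lam) * ENNReal.ofReal ((q t - quantile μ₀ t) ^ 2)
          + ENNReal.ofReal lam * ENNReal.ofReal ((q t - quantile μ₁ t) ^ 2)) ∂volume := by
        rw [lintegral_add_left' ((hae _ _ hqm (aemeasurable_quantile μ₀)).const_mul _),
          lintegral_const_mul' _ _ ENNReal.ofReal_ne_top,
          lintegral_const_mul' _ _ ENNReal.ofReal_ne_top]
    _ = ∫⁻ t in Ioo (0:ℝ) 1, ENNReal.ofReal (lam * (1 - lam) * (quantile μ₀ t - quantile μ₁ t) ^ 2) ∂volume := by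
        apply lintegral_congr
        intro t
        rw [← ENNReal.ofReal_mul (by linarith), ← ENNReal.ofReal_mul h0,
          ← ENNReal.ofReal_add (mul_nonneg (by linarith) (sq_nonneg _)) (mul_nonneg h0 (sq_nonneg _))]
        congr 1
        simp only [hq]
        ring
    _ ≤ ∫⁻ t in Ioo (0:ℝ) 1, (ENNReal.ofReal (1 - lam) * ENNReal.ofReal ((quantile μ t - quantile μ₀ t) ^ 2)
          + ENNReal.ofReal lam * ENNReal.ofReal ((quantile μ t - quantile μ₁ t) ^ 2)) ∂volume := by
        apply lintegral_mono
        intro t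
        dsimp only
        rw [← ENNReal.ofReal_mul (by linarith), ← ENNReal.ofReal_mul h0,
          ← ENNReal.ofReal_add (mul_nonneg (by linarith) (sq_nonneg _)) (mul_nonneg h0 (sq_nonneg _))]
        apply ENNReal.ofReal_le_ofReal
        nlinarith [sq_nonneg ((1 - lam) * (quantile μ t - quantile μ₀ t)
          + lam * (quantile μ t - quantile μ₁ t))]
    _ = ENNReal.ofReal (1 - lam) * ∫⁻ t in Ioo (0:ℝ) 1, ENNReal.ofReal ((quantile μ t - quantile μ₀ t) ^ 2) ∂volume
        + ENNReal.ofReal lam * ∫⁻ t in Ioo (0:ℝ) 1, ENNReal.ofReal ((quantile μ t - quantile μ₁ t) ^ 2) ∂volume := by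
        rw [lintegral_add_left' ((hae _ _ (aemeasurable_quantile μ) (aemeasurable_quantile μ₀)).const_mul _),
          lintegral_const_mul' _ _ ENNReal.ofReal_ne_top,
          lintegral_const_mul' _ _ ENNReal.ofReal_ne_top]
    _ ≤ ENNReal.ofReal (1 - lam) * wassersteinPow dist 2 μ μ₀
        + ENNReal.ofReal lam * wassersteinPow dist 2 μ μ₁ := by
        gcongr
end
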